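/- Suppose a_p ∈ {0,1,…,B} for every prime p and Σ_{p ≤ x} a_p/p = log log x + c_f + o(1) as x → ∞. Then the product σ(x) = Π_{p ≤ x} (1 − a_p/p) over primes p ≤ x with a_p < p satisfies σ(x) ∼ C_f / log x for some constant C_f > 0, provided a_p < p for all p. -/

import Mathlib

/-!
Write `σ(x) log x = exp (∑_{p ≤ x} (log (1 - a_p/p) + a_p/p) - (∑_{p ≤ x} a_p/p - log log x))`.
Since `a_p/p ≤ B/p`, the terms `log (1 - a_p/p) + a_p/p` are `O(1/p²)`, so the first sum
converges, to `S` say; the second tends to `c_f` by hypothesis. Hence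
`σ(x) log x → exp (S - c_f) > 0`.
-/

open Filter Finset Real Topology

lemma abs_log_one_sub_add_le {t : ℝ} (ht : t ≤ 1 / 2) :
    |log (1 - t) + t| ≤ 2 * t ^ 2 := by
  have hpos : 0 < 1 - t := by linarith
  have hupper : log (1 - t) + t ≤ 0 := by linarith [log_le_sub_one_of_pos hpos]
  have hlower : -(t ^ 2 / (1 - t)) ≤ log (1 - t) + t := by
    have h := one_sub_inv_le_log_of_pos hpos
    have hinv : 1 - (1 - t)⁻¹ = -(t ^ 2 / (1 - t)) - t := by field_simp; ring
    linarith
  have hquot : t ^ 2 / (1 - t) ≤ 2 * t ^ 2 := by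
    rw [div_le_iff₀ hpos]
    nlinarith [sq_nonneg t]
  rw [abs_le]
  constructor <;> linarith

lemma summable_log_one_sub_add {t : ℕ → ℝ} {C : ℝ} (ht0 : ∀ n, 0 ≤ t n)
    (htC : ∀ n, t n ≤ C / n) : Summable fun n => log (1 - t n) + t n := by
  have hsq : Summable fun n : ℕ => 2 * C ^ 2 * (1 / (n : ℝ) ^ 2) :=
    (summable_one_div_nat_pow.mpr one_lt_two).mul_left _
  refine hsq.of_norm_bounded_eventually_nat ?_
  filter_upwards [(tendsto_const_div_atTop_nhds_zero_nat C).eventually_le_const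
    (by norm_num : (0 : ℝ) < 1 / 2)] with n hn
  calc ‖log (1 - t n) + t n‖ ≤ 2 * t n ^ 2 :=
        abs_log_one_sub_add_le ((htC n).trans hn)
    _ ≤ 2 * (C / n) ^ 2 := by gcongr; exacts [ht0 n, htC n]
    _ = 2 * C ^ 2 * (1 / (n : ℝ) ^ 2) := by ring

lemma prod_one_sub_mul_eq_exp {t : ℕ → ℝ} (ht1 : ∀ n, t n < 1) (N : ℕ) {y : ℝ} (hy : 0 < y) :
    (∏ n ∈ range N, (1 - t n)) * y =
      exp (∑ n ∈ range N, (log (1 - t n) + t n) - (∑ n ∈ range N, t n - log y)) := by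
  have hlogs : ∑ n ∈ range N, (log (1 - t n) + t n) - (∑ n ∈ range N, t n - log y) =
      ∑ n ∈ range N, log (1 - t n) + log y := by
    rw [sum_add_distrib]; ring
  rw [hlogs, exp_add, exp_log hy, exp_sum]
  congr 1
  exact prod_congr rfl fun n _ => (exp_log (sub_pos.mpr (ht1 n))).symm

theorem tendsto_prod_one_sub_mul {α : Type*} {l : Filter α} {t : ℕ → ℝ} {C c : ℝ}
    (ht0 : ∀ n, 0 ≤ t n) (ht1 : ∀ n, t n < 1) (htC : ∀ n, t n ≤ C / n)
    {N : α → ℕ} (hN : Tendsto N l atTop) {y : α → ℝ} (hy : ∀ᶠ x in l, 0 < y x)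
    (hsum : Tendsto (fun x => ∑ n ∈ range (N x), t n - log (y x)) l (𝓝 c)) :
    Tendsto (fun x => (∏ n ∈ range (N x), (1 - t n)) * y x) l
      (𝓝 (exp (∑' n, (log (1 - t n) + t n) - c))) := by
  have hpartial := ((summable_log_one_sub_add ht0 htC).hasSum.tendsto_sum_nat).comp hN
  refine ((continuous_exp.tendsto _).comp (hpartial.sub hsum)).congr' ?_
  filter_upwards [hy] with x hx
  exact (prod_one_sub_mul_eq_exp ht1 (N x) hx).symm

theorem stmt_17_general (B : ℕ) (a : ℕ → ℕ)
    (ha : ∀ p, p.Prime → a p ≤ B) (ha' : ∀ p, p.Prime → a p < p)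
    (cf : ℝ)
    (hsum : Filter.Tendsto
      (fun x : ℝ =>
        (∑ p ∈ (Finset.range (⌊x⌋₊ + 1)).filter Nat.Prime, (a p : ℝ) / p) -
          Real.log (Real.log x))
      Filter.atTop (nhds cf)) :
    ∃ Cf : ℝ, 0 < Cf ∧ Filter.Tendsto
      (fun x : ℝ =>
        (∏ p ∈ (Finset.range (⌊x⌋₊ + 1)).filter Nat.Prime, (1 - (a p : ℝ) / p)) *
          Real.log x)
      Filter.atTop (nhds Cf) := by
  set t : ℕ → ℝ := fun n => if n.Prime then (a n : ℝ) / n else 0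
  have ht0 : ∀ n, 0 ≤ t n := fun n => by dsimp only [t]; split_ifs <;> positivity
  have ht1 : ∀ n, t n < 1 := fun n => by
    dsimp only [t]; split_ifs with hn
    · exact (div_lt_one (by exact_mod_cast hn.pos)).mpr (by exact_mod_cast ha' n hn)
    · exact one_pos
  have htB : ∀ n, t n ≤ B / n := fun n => by
    dsimp only [t]; split_ifs with hn
    · gcongr; exact_mod_cast ha n hn
    · positivity
  have hsum_eq : ∀ N, ∑ p ∈ (range N).filter Nat.Prime, (a p : ℝ) / p = ∑ n ∈ range N, t n :=
    fun N => sum_filter _ _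
  have hprod_eq : ∀ N, ∏ p ∈ (range N).filter Nat.Prime, (1 - (a p : ℝ) / p) =
      ∏ n ∈ range N, (1 - t n) := fun N => by
    rw [prod_filter]; exact prod_congr rfl fun n _ => by dsimp only [t]; split_ifs <;> simp
  refine ⟨exp (∑' n, (log (1 - t n) + t n) - cf), exp_pos _, ?_⟩
  simp only [hprod_eq]
  refine tendsto_prod_one_sub_mul (N := fun x : ℝ => ⌊x⌋₊ + 1) ht0 ht1 htB
    ((tendsto_add_atTop_nat 1).comp tendsto_nat_floor_atTop)
    ((eventually_gt_atTop 1).mono fun x hx => log_pos hx) ?_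
  simpa only [hsum_eq] using hsum

theorem stmt_17 (B : ℕ) (hB : 1 ≤ B) (a : ℕ → ℕ)
    (ha : ∀ p, p.Prime → a p ≤ B) (ha' : ∀ p, p.Prime → a p < p)
    (cf : ℝ)
    (hsum : Filter.Tendsto
      (fun x : ℝ =>
        (∑ p ∈ (Finset.range (⌊x⌋₊ + 1)).filter Nat.Prime, (a p : ℝ) / p) -
          Real.log (Real.log x))
      Filter.atTop (nhds cf)) :
    ∃ Cf : ℝ, 0 < Cf ∧ Filter.Tendsto
      (fun x : ℝ =>
        (∏ p ∈ (Finset.range (⌊x⌋₊ + 1)).filter Nat.Prime, (1 - (a p : ℝ) / p)) *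
          Real.log x)
      Filter.atTop (nhds Cf) :=
  stmt_17_general B a ha ha' cf hsum
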